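/- If y : (0,∞) → ℝ is twice differentiable, positive, satisfies y''(x) = y(x)^{3/2}/√x on (0,∞), is continuous at 0 with y(0) = 1, and y(x) → 0 as x → ∞, then y'(x) < 0 for all x > 0. -/
import Mathlib


open Filter

/-- For the Thomas–Fermi boundary value problem, the solution is strictly
decreasing: y'(x) < 0 for all x > 0. -/
theorem thomas_fermi_solution_strictly_decreasing
    (y : ℝ → ℝ)
    (hdiff : ∀ x : ℝ, 0 < x → DifferentiableAt ℝ y x ∧ DifferentiableAt ℝ (deriv y) x)
    (hpos : ∀ x : ℝ, 0 < x → 0 < y x)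
    (hode : ∀ x : ℝ, 0 < x → deriv (deriv y) x = (y x) ^ ((3:ℝ)/2) / Real.sqrt x)
    (h0 : Tendsto y (nhdsWithin 0 (Set.Ioi 0)) (nhds 1)) (hy0 : y 0 = 1)
    (hinf : Tendsto y atTop (nhds 0)) :
    ∀ x : ℝ, 0 < x → deriv y x < 0 := by
  intro x₀ hx₀
  by_contra h
  push_neg at h
  have hcont : ContinuousOn (deriv y) (Set.Ici x₀) := fun x hx =>
    ((hdiff x (lt_of_lt_of_le hx₀ hx)).2.continuousAt).continuousWithinAt
  have hmono : StrictMonoOn (deriv y) (Set.Ici x₀) := by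
    apply strictMonoOn_of_deriv_pos (convex_Ici _) hcont
    intro x hx
    rw [interior_Ici] at hx
    have hx0 : 0 < x := hx₀.trans hx
    rw [hode x hx0]
    exact div_pos (Real.rpow_pos_of_pos (hpos x hx0) _) (Real.sqrt_pos.mpr hx0)
  have hderiv_pos : ∀ x, x₀ < x → 0 < deriv y x := fun x hx =>
    lt_of_le_of_lt h (hmono Set.self_mem_Ici (le_of_lt hx) hx)
  have hycont : ContinuousOn y (Set.Ici x₀) := fun x hx =>
    ((hdiff x (lt_of_lt_of_le hx₀ hx)).1.continuousAt).continuousWithinAt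
  have hymono : StrictMonoOn y (Set.Ici x₀) := by
    apply strictMonoOn_of_deriv_pos (convex_Ici _) hycont
    intro x hx; rw [interior_Ici] at hx; exact hderiv_pos x hx
  have hb : 0 < y (x₀ + 1) := hpos _ (by linarith)
  obtain ⟨N, hN⟩ := eventually_atTop.mp (hinf.eventually_lt_const hb)
  set M := max N (x₀ + 2) with hM
  have hM2 : x₀ + 2 ≤ M := le_max_right _ _
  have h1 : y (x₀ + 1) < y M :=
    hymono (by simp only [Set.mem_Ici]; linarith) (by simp only [Set.mem_Ici]; linarith)
      (by linarith)
  have h2 : y M < y (x₀ + 1) := hN M (le_max_left _ _)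
  linarith
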